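/- Fix an even integer k ≥ 4 and a real A > 0. There exists a constant C = C(k, A) such that for every prime q, ∑_{n=1}^∞ n^{−3/2} |V(n/q)| · |W(√q · n²)| ≤ C · q^{−A}. -/

import Mathlib

/-- `γ_□(s) = π^{−3s/2} Γ((s+1)/2) Γ((s+k−1)/2) Γ((s+k)/2)`. -/
noncomputable def gammaBox (k : ℕ) (s : ℂ) : ℂ :=
  (Real.pi : ℂ) ^ (-3 * s / 2) * Complex.Gamma ((s + 1) / 2) *
    Complex.Gamma ((s + k - 1) / 2) * Complex.Gamma ((s + k) / 2)

/-- `V(y)`, the contour integral over `Re(s) = 2` of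
`γ_□(1/2+s)/γ_□(1/2) (1 − q^{−1−2s}) ζ(1+2s) y^{−s} ds/(2πis)`. -/
noncomputable def Vfun (k q : ℕ) (y : ℝ) : ℂ :=
  (1 / (2 * Real.pi)) *
    ∫ t : ℝ,
      (gammaBox k (5 / 2 + t * Complex.I) / gammaBox k (1 / 2)) *
        (1 - (q : ℂ) ^ (-(5 + 2 * t * Complex.I))) *
        riemannZeta (5 + 2 * t * Complex.I) *
        (y : ℂ) ^ (-(2 + t * Complex.I)) / (2 + t * Complex.I)

/-- `γ(s) = (2π)^{−s} Γ(s + (k−1)/2)`. -/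
noncomputable def gammaW (k : ℕ) (s : ℂ) : ℂ :=
  (2 * Real.pi : ℂ) ^ (-s) * Complex.Gamma (s + ((k : ℂ) - 1) / 2)

/-- `W(y)`, the contour integral over `Re(s) = 2` of `γ(1/2+s)/γ(1/2) y^{−s} ds/(2πis)`. -/
noncomputable def Wfun (k : ℕ) (y : ℝ) : ℂ :=
  (1 / (2 * Real.pi)) *
    ∫ t : ℝ,
      (gammaW k (5 / 2 + t * Complex.I) / gammaW k (1 / 2)) *
        (y : ℂ) ^ (-(2 + t * Complex.I)) / (2 + t * Complex.I)

/-!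
Both weights are estimated by the trivial bound on a line of integration. On `Re s = 2` one has
`|1 - q^{-1-2s}| ≤ 2`, `|ζ(1 + 2s)| ≤ ζ(2)`, and the Gamma factors decay like `|Im s|⁻²` because
`Γ(s + 2) = s (s + 1) Γ(s)`; this gives `V(y) ≪ y⁻²` uniformly in `q`. The integrand of `W` is
holomorphic on `Re s > 0` with the same decay uniformly in vertical strips, so its line can be
moved to `Re s = σ` for any `σ ≥ 2`, giving `W(y) ≪_σ y^{-σ}` for `y ≥ 1`. With `σ = 2A + 4` the
`n`-th term is `≪ q^{2 - σ/2} n⁻² = q^{-A} n⁻²`.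
-/

open Complex MeasureTheory Set Filter Topology
open scoped Interval

theorem Complex.norm_Gamma_le_Gamma_re {s : ℂ} (hs : 0 < s.re) :
    ‖Gamma s‖ ≤ Real.Gamma s.re := by
  rw [Gamma_eq_integral hs, Real.Gamma_eq_integral hs, GammaIntegral]
  refine (norm_integral_le_integral_norm _).trans_eq <|
    setIntegral_congr_fun measurableSet_Ioi fun x hx => ?_
  rw [norm_mul, norm_real, Real.norm_of_nonneg (Real.exp_pos _).le,
    norm_cpow_eq_rpow_re_of_pos hx, sub_re, one_re]

/-- The functional equation `Γ(s + 2) = s (s + 1) Γ(s)` trades two units of real part for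
decay of order `|Im s|⁻²`. -/
theorem Complex.norm_Gamma_mul_one_add_im_sq_le {s : ℂ} (hs : 1 ≤ s.re) :
    ‖Gamma s‖ * (1 + s.im ^ 2) ≤ Real.Gamma (s.re + 2) := by
  have hs0 : s ≠ 0 := fun h => by simp [h] at hs; linarith
  have hs1 : s + 1 ≠ 0 := fun h => by
    have := congrArg re h; simp at this; linarith
  have hfun : Gamma (s + 2) = s * (s + 1) * Gamma s := by
    rw [show s + 2 = s + 1 + 1 by ring, Gamma_add_one _ hs1, Gamma_add_one _ hs0]; ring
  have hlow (w : ℂ) (hw : 1 ≤ w.re) : 1 + w.im ^ 2 ≤ ‖w‖ ^ 2 := by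
    rw [← normSq_eq_norm_sq, normSq_apply]; nlinarith
  have hprod : 1 + s.im ^ 2 ≤ ‖s‖ * ‖s + 1‖ := by
    have h1 := hlow s hs
    have h2 := hlow (s + 1) (by simp; linarith)
    simp only [add_im, one_im, add_zero] at h2
    rw [← pow_le_pow_iff_left₀ (by positivity) (by positivity) two_ne_zero, mul_pow, sq]
    gcongr
  calc ‖Gamma s‖ * (1 + s.im ^ 2) ≤ ‖Gamma s‖ * (‖s‖ * ‖s + 1‖) := by gcongr
    _ = ‖Gamma (s + 2)‖ := by rw [hfun, norm_mul, norm_mul]; ring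
    _ ≤ Real.Gamma (s.re + 2) := by
      simpa using norm_Gamma_le_Gamma_re (s := s + 2) (by simp; linarith)

theorem norm_riemannZeta_le_tsum {s : ℂ} {σ : ℝ} (hσ : 1 < σ) (hs : σ ≤ s.re) :
    ‖riemannZeta s‖ ≤ ∑' n : ℕ, ((n : ℝ) + 1) ^ (-σ) := by
  have hnorm (n : ℕ) : ‖1 / ((n : ℂ) + 1) ^ s‖ = ((n : ℝ) + 1) ^ (-s.re) := by
    rw [norm_div, norm_one, ← ofReal_natCast, ← ofReal_one, ← ofReal_add,
      norm_cpow_eq_rpow_re_of_pos (by positivity), Real.rpow_neg (by positivity), one_div]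
  have hsum (τ : ℝ) (hτ : 1 < τ) : Summable fun n : ℕ => ((n : ℝ) + 1) ^ (-τ) := by
    simpa using (summable_nat_add_iff 1).mpr (Real.summable_nat_rpow.mpr (by linarith : -τ < -1))
  have hsum_s : Summable fun n : ℕ => ‖1 / ((n : ℂ) + 1) ^ s‖ := by
    simpa only [hnorm] using hsum s.re (by linarith)
  rw [zeta_eq_tsum_one_div_nat_add_one_cpow (by linarith)]
  refine (norm_tsum_le_tsum_norm hsum_s).trans <|
    hsum_s.tsum_le_tsum (fun n => ?_) (hsum σ hσ)
  rw [hnorm]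
  exact Real.rpow_le_rpow_of_exponent_le (by linarith [n.cast_nonneg (α := ℝ)]) (by linarith)

theorem integrable_of_norm_le_div_one_add_sq {E : Type*} [NormedAddCommGroup E] {g : ℝ → E}
    {M : ℝ} (hg : AEStronglyMeasurable g) (h : ∀ t, ‖g t‖ ≤ M / (1 + t ^ 2)) : Integrable g :=
  (integrable_inv_one_add_sq.const_mul M).mono' hg
    (ae_of_all _ fun t => (h t).trans_eq (div_eq_mul_inv _ _))

theorem norm_one_div_two_pi_mul_integral_le {g : ℝ → ℂ} {M : ℝ}
    (h : ∀ t, ‖g t‖ ≤ M / (1 + t ^ 2)) : ‖(1 / (2 * Real.pi) : ℂ) * ∫ t, g t‖ ≤ M / 2 := by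
  have hint : ‖∫ t, g t‖ ≤ ∫ t : ℝ, M * (1 + t ^ 2)⁻¹ :=
    norm_integral_le_of_norm_le (integrable_inv_one_add_sq.const_mul M)
      (ae_of_all _ fun t => (h t).trans_eq (div_eq_mul_inv _ _))
  rw [integral_const_mul, integral_univ_inv_one_add_sq] at hint
  have hc : ‖(1 / (2 * Real.pi) : ℂ)‖ = 1 / (2 * Real.pi) := by
    rw [← ofReal_ofNat, ← ofReal_mul, ← ofReal_one, ← ofReal_div, norm_real,
      Real.norm_of_nonneg (by positivity)]
  rw [norm_mul, hc]
  calc 1 / (2 * Real.pi) * ‖∫ t, g t‖ ≤ 1 / (2 * Real.pi) * (M * Real.pi) := by gcongr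
    _ = M / 2 := by field_simp

theorem tendsto_div_one_add_sq_cocompact (M : ℝ) :
    Tendsto (fun T : ℝ => M / (1 + T ^ 2)) (cocompact ℝ) (𝓝 0) := by
  have hsq : Tendsto (fun T : ℝ => 1 + ‖T‖ ^ 2) (cocompact ℝ) atTop :=
    tendsto_atTop_add_const_left _ 1 <|
      (tendsto_pow_atTop two_ne_zero).comp tendsto_norm_cocompact_atTop
  simpa [div_eq_mul_inv] using hsq.inv_tendsto_atTop.const_mul M

theorem tendstoUniformlyOn_zero_of_norm_le {ι α E : Type*} [SeminormedAddCommGroup E]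
    {F : ι → α → E} {g : ι → ℝ} {l : Filter ι} {s : Set α} (hg : Tendsto g l (𝓝 0))
    (hF : ∀ i, ∀ x ∈ s, ‖F i x‖ ≤ g i) : TendstoUniformlyOn F 0 l s := by
  rw [Metric.tendstoUniformlyOn_iff]
  intro ε hε
  filter_upwards [hg.eventually (gt_mem_nhds hε)] with i hi x hx
  simpa [dist_eq_norm] using (hF i x hx).trans_lt hi

/-- Cauchy's theorem on the rectangles `[σ₁, σ₂] × [-T, T]`, letting `T → ∞`. -/
theorem Complex.integral_vertical_eq_of_differentiableOn_strip {E : Type*} [NormedAddCommGroup E]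
    [NormedSpace ℂ E] [CompleteSpace E] {f : ℂ → E} {σ₁ σ₂ : ℝ}
    (hf : DifferentiableOn ℂ f (re ⁻¹' [[σ₁, σ₂]]))
    (h₁ : Integrable fun t : ℝ => f (σ₁ + t * I)) (h₂ : Integrable fun t : ℝ => f (σ₂ + t * I))
    (hdecay : TendstoUniformlyOn (fun T x : ℝ => f (x + T * I)) 0 (cocompact ℝ) [[σ₁, σ₂]]) :
    ∫ t : ℝ, f (σ₁ + t * I) = ∫ t : ℝ, f (σ₂ + t * I) := by
  set H : ℝ → E := fun T => ∫ x in σ₁..σ₂, f (x + T * I)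
  -- `cocompact ℝ` is not countably generated as an instance, so both ends are handled separately.
  have hH : ∀ l ≤ cocompact ℝ, l.IsCountablyGenerated → Tendsto H l (𝓝 0) := by
    intro l hl _
    have hcont (T : ℝ) : ContinuousOn (fun x : ℝ => f (x + T * I)) [[σ₁, σ₂]] :=
      hf.continuousOn.comp (by fun_prop) fun x hx => by simpa using hx
    simpa using TendstoUniformlyOn.tendsto_intervalIntegral_of_continuousOn
      (Eventually.of_forall hcont) fun u hu => hl (hdecay u hu)
  have hrect (T : ℝ) : I • ((∫ t in (-T)..T, f (σ₂ + t * I)) - ∫ t in (-T)..T, f (σ₁ + t * I))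
      = H T - H (-T) := by
    have := integral_boundary_rect_eq_zero_of_differentiableOn f ⟨σ₁, -T⟩ ⟨σ₂, T⟩
      (hf.mono fun s hs => hs.1)
    simp only [H, ofReal_neg] at this ⊢
    rw [smul_sub, ← sub_eq_zero, ← this]
    abel
  have hvert (σ : ℝ) (h : Integrable fun t : ℝ => f (σ + t * I)) :
      Tendsto (fun T : ℝ => ∫ t in (-T)..T, f (σ + t * I)) atTop (𝓝 (∫ t : ℝ, f (σ + t * I))) :=
    intervalIntegral_tendsto_integral h tendsto_neg_atTop_atBot tendsto_id
  have hlim : Tendsto (fun T : ℝ => H T - H (-T)) atTop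
      (𝓝 (I • ((∫ t : ℝ, f (σ₂ + t * I)) - ∫ t : ℝ, f (σ₁ + t * I)))) := by
    simpa only [hrect] using ((hvert σ₂ h₂).sub (hvert σ₁ h₁)).const_smul I
  have hzero : Tendsto (fun T : ℝ => H T - H (-T)) atTop (𝓝 0) := by
    simpa using (hH atTop atTop_le_cocompact inferInstance).sub
      ((hH atBot atBot_le_cocompact inferInstance).comp tendsto_neg_atTop_atBot)
  have := tendsto_nhds_unique hlim hzero
  rw [smul_eq_zero, sub_eq_zero] at this
  exact (this.resolve_left I_ne_zero).symm

theorem norm_gammaBox_le (k : ℕ) (t : ℝ) :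
    ‖gammaBox k (5 / 2 + t * I)‖ ≤ 4 * Real.Gamma (15 / 4) * Real.Gamma ((k + 3 / 2) / 2) *
      Real.Gamma ((k + 5 / 2) / 2) / (1 + t ^ 2) := by
  have hpi : ‖(Real.pi : ℂ) ^ (-3 * (5 / 2 + t * I) / 2)‖ ≤ 1 := by
    rw [norm_cpow_eq_rpow_re_of_pos Real.pi_pos]
    exact Real.rpow_le_one_of_one_le_of_nonpos (by linarith [Real.pi_gt_three]) (by simp; norm_num)
  have h₁ : ‖Gamma ((5 / 2 + t * I + 1) / 2)‖ ≤ 4 * Real.Gamma (15 / 4) / (1 + t ^ 2) := by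
    have h := norm_Gamma_mul_one_add_im_sq_le (s := (5 / 2 + t * I + 1) / 2) (by simp; norm_num)
    have hre : ((5 / 2 + t * I + 1) / 2 : ℂ).re + 2 = 15 / 4 := by simp; norm_num
    have him : ((5 / 2 + t * I + 1) / 2 : ℂ).im = t / 2 := by simp
    rw [hre, him] at h
    rw [le_div_iff₀ (by positivity)]
    nlinarith [norm_nonneg (Gamma ((5 / 2 + t * I + 1) / 2)), sq_nonneg t]
  have h₂ : ‖Gamma ((5 / 2 + t * I + k - 1) / 2)‖ ≤ Real.Gamma ((k + 3 / 2) / 2) := by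
    convert norm_Gamma_le_Gamma_re (s := (5 / 2 + t * I + k - 1) / 2) (by simp; linarith) using 2
    simp; ring
  have h₃ : ‖Gamma ((5 / 2 + t * I + k) / 2)‖ ≤ Real.Gamma ((k + 5 / 2) / 2) := by
    convert norm_Gamma_le_Gamma_re (s := (5 / 2 + t * I + k) / 2) (by simp; linarith) using 2
    simp; ring
  calc ‖gammaBox k (5 / 2 + t * I)‖
      ≤ 1 * (4 * Real.Gamma (15 / 4) / (1 + t ^ 2)) * Real.Gamma ((k + 3 / 2) / 2) *
          Real.Gamma ((k + 5 / 2) / 2) := by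
        simp only [gammaBox, norm_mul]
        gcongr
    _ = _ := by ring

theorem exists_norm_Vfun_le (k : ℕ) :
    ∃ C : ℝ, 0 ≤ C ∧ ∀ q : ℕ, 1 ≤ q → ∀ y : ℝ, 0 < y → ‖Vfun k q y‖ ≤ C * y ^ (-(2 : ℝ)) := by
  set B := 4 * Real.Gamma (15 / 4) * Real.Gamma ((k + 3 / 2) / 2) * Real.Gamma ((k + 5 / 2) / 2)
  set Z := ∑' n : ℕ, ((n : ℝ) + 1) ^ (-(2 : ℝ))
  have hB : 0 ≤ B := by positivity
  have hZ : 0 ≤ Z := tsum_nonneg fun n => by positivity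
  refine ⟨B / ‖gammaBox k (1 / 2)‖ * Z / 2, by positivity, fun q hq y hy => ?_⟩
  have hEuler (t : ℝ) : ‖1 - (q : ℂ) ^ (-(5 + 2 * t * I))‖ ≤ 2 := by
    have hq' : (1 : ℝ) ≤ q := by exact_mod_cast hq
    have : ‖(q : ℂ) ^ (-(5 + 2 * t * I))‖ ≤ 1 := by
      rw [← ofReal_natCast, norm_cpow_eq_rpow_re_of_pos (by positivity)]
      exact Real.rpow_le_one_of_one_le_of_nonpos hq' (by simp)
    linarith [norm_sub_le (1 : ℂ) ((q : ℂ) ^ (-(5 + 2 * t * I))), norm_one (α := ℂ)]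
  have hzeta (t : ℝ) : ‖riemannZeta (5 + 2 * t * I)‖ ≤ Z :=
    norm_riemannZeta_le_tsum one_lt_two (by simp; norm_num)
  have hy (t : ℝ) : ‖(y : ℂ) ^ (-(2 + t * I))‖ = y ^ (-(2 : ℝ)) := by
    rw [norm_cpow_eq_rpow_re_of_pos hy]; simp
  have hden (t : ℝ) : 2 ≤ ‖2 + t * I‖ := by
    simpa using abs_re_le_norm (2 + t * I : ℂ)
  unfold Vfun
  refine (norm_one_div_two_pi_mul_integral_le
    (M := B / ‖gammaBox k (1 / 2)‖ * Z * y ^ (-(2 : ℝ))) fun t => ?_).trans_eq (by ring)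
  calc _ ≤ B / (1 + t ^ 2) / ‖gammaBox k (1 / 2)‖ * 2 * Z * y ^ (-(2 : ℝ)) / 2 := by
        simp only [norm_div, norm_mul, hy]
        gcongr
        · exact norm_gammaBox_le k t
        · exact hEuler t
        · exact hzeta t
        · exact hden t
    _ = B / ‖gammaBox k (1 / 2)‖ * Z * y ^ (-(2 : ℝ)) / (1 + t ^ 2) := by ring

noncomputable def mellinIntegrandW (k : ℕ) (y : ℝ) (s : ℂ) : ℂ :=
  gammaW k (1 / 2 + s) / gammaW k (1 / 2) * (y : ℂ) ^ (-s) / s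

theorem Wfun_eq_integral_mellinIntegrandW (k : ℕ) (y : ℝ) :
    Wfun k y = 1 / (2 * Real.pi) * ∫ t : ℝ, mellinIntegrandW k y ((2 : ℝ) + t * I) := by
  simp only [Wfun, mellinIntegrandW, ofReal_ofNat]
  congr 2 with t
  rw [show (1 / 2 + (2 + t * I) : ℂ) = 5 / 2 + t * I by ring, neg_add]

theorem differentiableAt_mellinIntegrandW (k : ℕ) {y : ℝ} (hy : 0 < y) {s : ℂ} (hs : 0 < s.re) :
    DifferentiableAt ℂ (mellinIntegrandW k y) s := by
  have hΓ : DifferentiableAt ℂ (fun s : ℂ => Gamma (1 / 2 + s + ((k : ℂ) - 1) / 2)) s := by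
    refine (differentiableAt_Gamma _ fun m h => ?_).comp s (by fun_prop)
    have := congrArg re h
    simp at this
    linarith [m.cast_nonneg (α := ℝ), k.cast_nonneg (α := ℝ)]
  have h2pi : (2 * Real.pi : ℂ) ≠ 0 := by exact_mod_cast Real.two_pi_pos.ne'
  have hy' : (y : ℂ) ≠ 0 := by exact_mod_cast hy.ne'
  have hs0 : s ≠ 0 := fun h => by simp [h] at hs
  unfold mellinIntegrandW gammaW
  exact ((((differentiableAt_id.const_add _).neg.const_cpow (.inl h2pi)).mul hΓ).div_const _
    |>.mul (differentiableAt_id.neg.const_cpow (.inl hy'))).div differentiableAt_id hs0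

theorem norm_mellinIntegrandW_le (k : ℕ) {y a b x : ℝ} (hy : 1 ≤ y) (ha : 1 ≤ a)
    (hx : x ∈ Icc a b) (t : ℝ) :
    ‖mellinIntegrandW k y (x + t * I)‖ ≤
      Real.Gamma (b + k / 2 + 2) / (‖gammaW k (1 / 2)‖ * a) * y ^ (-a) / (1 + t ^ 2) := by
  set s : ℂ := x + t * I
  have hs : s.re ∈ Icc a b := by simpa [s] using hx
  have him : s.im = t := by simp [s]
  have hpi : ‖(2 * Real.pi : ℂ) ^ (-(1 / 2 + s))‖ ≤ 1 := by
    rw [← ofReal_ofNat, ← ofReal_mul, norm_cpow_eq_rpow_re_of_pos Real.two_pi_pos]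
    refine Real.rpow_le_one_of_one_le_of_nonpos (by linarith [Real.pi_gt_three]) ?_
    simp only [neg_re, add_re]
    norm_num
    linarith [hs.1]
  have hΓ : ‖Gamma (1 / 2 + s + ((k : ℂ) - 1) / 2)‖ ≤ Real.Gamma (b + k / 2 + 2) / (1 + t ^ 2) := by
    have hre : (1 / 2 + s + ((k : ℂ) - 1) / 2).re = s.re + k / 2 := by simp; ring
    have h := norm_Gamma_mul_one_add_im_sq_le (s := 1 / 2 + s + ((k : ℂ) - 1) / 2)
      (by rw [hre]; linarith [hs.1, k.cast_nonneg (α := ℝ)])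
    have him' : (1 / 2 + s + ((k : ℂ) - 1) / 2).im = t := by simp [him]
    rw [hre, him'] at h
    rw [le_div_iff₀ (by positivity)]
    refine h.trans <| Real.Gamma_strictMonoOn_Ici.monotoneOn ?_ ?_ (by linarith [hs.2]) <;>
      simp only [mem_Ici] <;> linarith [hs.1, hs.2, k.cast_nonneg (α := ℝ)]
  have hys : ‖(y : ℂ) ^ (-s)‖ ≤ y ^ (-a) := by
    rw [norm_cpow_eq_rpow_re_of_pos (by linarith), neg_re]
    exact Real.rpow_le_rpow_of_exponent_le hy (neg_le_neg hs.1)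
  have hsa : a ≤ ‖s‖ := hs.1.trans (re_le_norm s)
  have hG : 0 ≤ Real.Gamma (b + k / 2 + 2) :=
    (Real.Gamma_pos_of_pos (by linarith [hs.1, hs.2, k.cast_nonneg (α := ℝ)])).le
  calc ‖mellinIntegrandW k y s‖
      ≤ 1 * (Real.Gamma (b + k / 2 + 2) / (1 + t ^ 2)) / ‖gammaW k (1 / 2)‖ * y ^ (-a) / a := by
        simp only [mellinIntegrandW, gammaW, norm_div, norm_mul]
        gcongr
    _ = _ := by ring

theorem integral_mellinIntegrandW_eq (k : ℕ) {y σ : ℝ} (hy : 1 ≤ y) (hσ : 2 ≤ σ) :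
    ∫ t : ℝ, mellinIntegrandW k y ((2 : ℝ) + t * I) =
      ∫ t : ℝ, mellinIntegrandW k y (σ + t * I) := by
  have hy0 : 0 < y := by linarith
  have hline (τ : ℝ) (hτ : 1 ≤ τ) : Integrable fun t : ℝ => mellinIntegrandW k y (τ + t * I) := by
    have hcont : Continuous fun t : ℝ => mellinIntegrandW k y (τ + t * I) :=
      continuous_iff_continuousAt.2 fun t =>
        (differentiableAt_mellinIntegrandW k hy0 (by simp; linarith)).continuousAt.comp
          (by fun_prop)
    exact integrable_of_norm_le_div_one_add_sq hcont.aestronglyMeasurable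
      (norm_mellinIntegrandW_le k hy hτ ⟨le_rfl, le_rfl⟩)
  refine integral_vertical_eq_of_differentiableOn_strip (fun s hs => ?_) (hline 2 one_le_two)
    (hline σ (by linarith)) ?_
  · rw [mem_preimage, uIcc_of_le hσ] at hs
    exact (differentiableAt_mellinIntegrandW k hy0 (by linarith [hs.1])).differentiableWithinAt
  · rw [uIcc_of_le hσ]
    exact tendstoUniformlyOn_zero_of_norm_le (tendsto_div_one_add_sq_cocompact _)
      fun T x hx => norm_mellinIntegrandW_le k hy one_le_two hx T

theorem exists_norm_Wfun_le (k : ℕ) {σ : ℝ} (hσ : 2 ≤ σ) :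
    ∃ C : ℝ, 0 ≤ C ∧ ∀ y : ℝ, 1 ≤ y → ‖Wfun k y‖ ≤ C * y ^ (-σ) := by
  have hG : 0 < Real.Gamma (σ + k / 2 + 2) := Real.Gamma_pos_of_pos (by positivity)
  refine ⟨Real.Gamma (σ + k / 2 + 2) / (‖gammaW k (1 / 2)‖ * σ) / 2, by positivity,
    fun y hy => ?_⟩
  rw [Wfun_eq_integral_mellinIntegrandW, integral_mellinIntegrandW_eq k hy hσ]
  refine (norm_one_div_two_pi_mul_integral_le
    (M := Real.Gamma (σ + k / 2 + 2) / (‖gammaW k (1 / 2)‖ * σ) * y ^ (-σ)) fun t => ?_).trans_eq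
    (by ring)
  exact norm_mellinIntegrandW_le k hy (by linarith) ⟨le_rfl, le_rfl⟩ t

theorem summand_weight_le {A n q : ℝ} (hA : 0 ≤ A) (hn : 1 ≤ n) (hq : 1 ≤ q) :
    n ^ (-(3 : ℝ) / 2) * (n / q) ^ (-(2 : ℝ)) * (√q * n ^ 2) ^ (-(2 * A + 4)) ≤
      q ^ (-A) * n ^ (-(2 : ℝ)) := by
  have hn0 : 0 < n := by linarith
  have hq0 : 0 < q := by linarith
  calc n ^ (-(3 : ℝ) / 2) * (n / q) ^ (-(2 : ℝ)) * (√q * n ^ 2) ^ (-(2 * A + 4))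
      = (q ^ (2 : ℝ) * q ^ (1 / 2 * -(2 * A + 4))) *
          (n ^ (-(3 : ℝ) / 2) * n ^ (-(2 : ℝ)) * n ^ (2 * -(2 * A + 4))) := by
        rw [Real.div_rpow hn0.le hq0.le, Real.mul_rpow (Real.sqrt_nonneg _) (by positivity),
          Real.sqrt_eq_rpow, ← Real.rpow_natCast n 2, ← Real.rpow_mul hq0.le,
          ← Real.rpow_mul hn0.le, Real.rpow_neg hq0.le, div_inv_eq_mul]
        push_cast
        ring
    _ = q ^ (-A) * n ^ (-(3 : ℝ) / 2 - 2 - 2 * (2 * A + 4)) := by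
        rw [← Real.rpow_add hq0, ← Real.rpow_add hn0, ← Real.rpow_add hn0]
        ring_nf
    _ ≤ q ^ (-A) * n ^ (-(2 : ℝ)) := by
        gcongr
        linarith

theorem statement10_general (k : ℕ) (A : ℝ) (hA : 0 < A) :
    ∃ C : ℝ, ∀ q : ℕ, q.Prime →
      (∑' n : ℕ+, (n : ℝ) ^ (-(3 : ℝ) / 2) * ‖Vfun k q ((n : ℝ) / q)‖ *
          ‖Wfun k (Real.sqrt q * (n : ℝ) ^ 2)‖)
        ≤ C * (q : ℝ) ^ (-A) := by
  obtain ⟨CV, hCV, hV⟩ := exists_norm_Vfun_le k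
  obtain ⟨CW, hCW, hW⟩ := exists_norm_Wfun_le k (σ := 2 * A + 4) (by linarith)
  have hsum : Summable fun n : ℕ+ => (n : ℝ) ^ (-(2 : ℝ)) :=
    (Real.summable_nat_rpow.mpr (by norm_num)).comp_injective PNat.coe_injective
  refine ⟨CV * CW * ∑' n : ℕ+, (n : ℝ) ^ (-(2 : ℝ)), fun q hq => ?_⟩
  have hq1 : 1 ≤ q := hq.one_lt.le
  have hq1' : (1 : ℝ) ≤ q := by exact_mod_cast hq1
  have hterm (n : ℕ+) : (n : ℝ) ^ (-(3 : ℝ) / 2) * ‖Vfun k q ((n : ℝ) / q)‖ *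
      ‖Wfun k (Real.sqrt q * (n : ℝ) ^ 2)‖ ≤ CV * CW * (q : ℝ) ^ (-A) * (n : ℝ) ^ (-(2 : ℝ)) := by
    have hn : (1 : ℝ) ≤ n := by exact_mod_cast n.pos
    calc _ ≤ (n : ℝ) ^ (-(3 : ℝ) / 2) * (CV * ((n : ℝ) / q) ^ (-(2 : ℝ))) *
          (CW * (√q * (n : ℝ) ^ 2) ^ (-(2 * A + 4))) := by
          gcongr
          · exact hV q hq1 _ (by positivity)
          · exact hW _ (one_le_mul_of_one_le_of_one_le (Real.one_le_sqrt.mpr hq1')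
              (one_le_pow₀ hn))
      _ = CV * CW * ((n : ℝ) ^ (-(3 : ℝ) / 2) * ((n : ℝ) / q) ^ (-(2 : ℝ)) *
          (√q * (n : ℝ) ^ 2) ^ (-(2 * A + 4))) := by ring
      _ ≤ CV * CW * ((q : ℝ) ^ (-A) * (n : ℝ) ^ (-(2 : ℝ))) :=
          mul_le_mul_of_nonneg_left (summand_weight_le hA.le hn hq1') (by positivity)
      _ = _ := by ring
  have hsum_terms := (hsum.mul_left (CV * CW * (q : ℝ) ^ (-A))).of_nonneg_of_le
    (fun n => by positivity) hterm
  calc _ ≤ ∑' n : ℕ+, CV * CW * (q : ℝ) ^ (-A) * (n : ℝ) ^ (-(2 : ℝ)) :=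
        hsum_terms.tsum_le_tsum hterm (hsum.mul_left _)
    _ = _ := by rw [tsum_mul_left]; ring

/-- For every prime `q`,
`∑_{n≥1} n^{−3/2} |V(n/q)| |W(√q n²)| ≪_{k,A} q^{−A}`. -/
theorem statement10 (k : ℕ) (hk : Even k) (hk4 : 4 ≤ k) (A : ℝ) (hA : 0 < A) :
    ∃ C : ℝ, ∀ q : ℕ, q.Prime →
      (∑' n : ℕ+, (n : ℝ) ^ (-(3 : ℝ) / 2) * ‖Vfun k q ((n : ℝ) / q)‖ *
          ‖Wfun k (Real.sqrt q * (n : ℝ) ^ 2)‖)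
        ≤ C * (q : ℝ) ^ (-A) :=
  statement10_general k A hA
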